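/- For all integers n ≥ k ≥ 0, the Delannoy number satisfies D(n,k) = Σ_{d=0}^{k} C(k,d)·C(n+d, k). -/
import Mathlib

/-- Delannoy numbers: `D n 0 = D 0 k = 1`, and
`D (n+1) (k+1) = D (n+1) k + D n k + D n (k+1)`. -/
def D : ℕ → ℕ → ℕ
  | _, 0 => 1
  | 0, _ => 1
  | n + 1, k + 1 => D (n + 1) k + D n k + D n (k + 1)
termination_by n k => n + k

open Finset

lemma S1 (n k : ℕ) :
    ∑ d ∈ range (k+2), (k+1).choose d * (n+d).choose k
    = ∑ d ∈ range (k+1), k.choose d * (n+1+d).choose k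
    + ∑ d ∈ range (k+1), k.choose d * (n+d).choose k := by
  rw [Finset.sum_range_succ' _ (k+1)]
  simp only [Nat.choose_succ_succ, add_mul, Finset.sum_add_distrib, Nat.choose_zero_right,
    one_mul, add_zero]
  have e1 : ∑ d ∈ range (k+1), k.choose d * (n+(d+1)).choose k
      = ∑ d ∈ range (k+1), k.choose d * (n+1+d).choose k := by
    apply Finset.sum_congr rfl; intro d _; rw [show n+(d+1) = n+1+d by omega]
  have e2 : ∑ d ∈ range (k+1), k.choose (d+1) * (n+(d+1)).choose k + (n+0).choose k
      = ∑ d ∈ range (k+1), k.choose d * (n+d).choose k := by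
    rw [Finset.sum_range_succ]
    simp [Nat.choose_succ_self]
    rw [Finset.sum_range_succ' (fun d => k.choose d * (n+d).choose k) k]
    simp
  simp only [add_zero, Nat.succ_eq_add_one] at *
  linarith

lemma key (n k : ℕ) :
    ∑ d ∈ range (k+2), (k+1).choose d * (n+1+d).choose (k+1)
    = ∑ d ∈ range (k+1), k.choose d * (n+1+d).choose k
    + ∑ d ∈ range (k+1), k.choose d * (n+d).choose k
    + ∑ d ∈ range (k+2), (k+1).choose d * (n+d).choose (k+1) := by
  have h1 : ∀ d, (n+1+d).choose (k+1) = (n+d).choose k + (n+d).choose (k+1) := by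
    intro d; rw [show n+1+d = (n+d)+1 by omega, Nat.choose_succ_succ]
  simp only [h1, mul_add, Finset.sum_add_distrib]
  have := S1 n k
  linarith

lemma main_eq : ∀ n k : ℕ, D n k = ∑ d ∈ range (k+1), k.choose d * (n+d).choose k := by
  intro n k
  induction n, k using D.induct with
  | case1 n => simp [D]
  | case2 k hk =>
      obtain ⟨m, rfl⟩ := Nat.exists_eq_succ_of_ne_zero (fun h => hk h)
      have hD : D 0 (m+1) = 1 := by simp [D]
      rw [hD, Finset.sum_range_succ]
      simp only [zero_add]
      have hz : ∑ d ∈ range (m+1), (m+1).choose d * d.choose (m+1) = 0 := by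
        apply Finset.sum_eq_zero
        intro d hd
        have hdm : d < m+1 := Finset.mem_range.mp hd
        exact mul_eq_zero_of_right _ (Nat.choose_eq_zero_of_lt hdm)
      simp [hz]
  | case3 n k ih1 ih2 ih3 =>
      rw [D, ih1, ih2, ih3]
      have := key n k
      linarith

theorem delannoy_stmt_6 (n k : ℕ) (h : k ≤ n) :
    D n k = ∑ d ∈ Finset.range (k + 1), k.choose d * (n + d).choose k := main_eq n k
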